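/- arXiv:1010.4807 — 4 statements merged into one kernel-verified Lean document; each statement's English description precedes it below -/
import Mathlib

section
/- In the algebra R (with relations [z, z̄] = iħ₁(1 + 2ħ₂γ), γ anticommuting with z, z̄, γ² = 1), for every positive integer p one has the identity (2iħ₁)^{-1}[z², z̄^p] = p·z·z̄^{p-1} − (p(p−1)/2)·iħ₁·z̄^{p−2} − 2iħ₁ħ₂·(−1)^p·⌊p/2⌋·z̄^{p−2}·γ, where ⌊·⌋ denotes the floor function. -/
/-!
Write `c = iħ₁` and `[z, z̄] = c + 2cħ₂ γ`. Since `γ` anticommutes with `z̄`, the Leibniz rule gives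
by induction `[z, z̄ⁿ] = n c z̄ⁿ⁻¹ + 2cħ₂ (n mod 2) z̄ⁿ⁻¹ γ`: moving `γ` past the remaining factors of
`z̄` produces alternating signs. Then `[z², y] = z [z, y] + [z, y] z`, and `z u + u z = 2 z u - [z, u]`,
`z u γ + u γ z = [z, u] γ` (as `γ` anticommutes with `z`) reduce `[z², z̄ᵖ]` to the formula for
`[z, z̄ᵖ⁻¹]`; what remains is the parity identity `(p mod 2)(p - 1) - p (p - 1 mod 2) = -2 (-1)ᵖ ⌊p/2⌋`.
-/

namespace Ring

variable {A : Type*} [Ring A]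

theorem lie_mul_right (x y w : A) : ⁅x, y * w⁆ = ⁅x, y⁆ * w + y * ⁅x, w⁆ := by
  simp only [lie_def]; noncomm_ring

theorem lie_mul_left (x y w : A) : ⁅x * y, w⁆ = x * ⁅y, w⁆ + ⁅x, w⁆ * y := by
  simp only [lie_def]; noncomm_ring

end Ring

section Parity

variable {K : Type*} [CommRing K]

theorem natCast_add_one_mod_two (n : ℕ) : (((n + 1) % 2 : ℕ) : K) = 1 - ((n % 2 : ℕ) : K) :=
  eq_sub_of_add_eq (by rw [← Nat.cast_add, Nat.succ_mod_two_add_mod_two, Nat.cast_one])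

theorem natCast_mod_two_mul_pred_mod_two (n : ℕ) :
    ((n % 2 : ℕ) : K) * (((n - 1) % 2 : ℕ) : K) = 0 := by
  rcases Nat.even_or_odd' n with ⟨k, rfl | rfl⟩ <;> simp

theorem natCast_mul_pred (n : ℕ) :
    (n : K) * ((n - 1 : ℕ) : K) = 2 * ((n * (n - 1) / 2 : ℕ) : K) := by
  rw [← Nat.cast_two, ← Nat.cast_mul, ← Nat.cast_mul,
    Nat.two_mul_div_two_of_even (Nat.even_mul_pred_self n)]

theorem natCast_mod_two_mul_pred_sub (n : ℕ) :
    ((n % 2 : ℕ) : K) * ((n - 1 : ℕ) : K) - n * (((n - 1) % 2 : ℕ) : K)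
      = -2 * (-1) ^ n * ((n / 2 : ℕ) : K) := by
  rcases Nat.even_or_odd' n with ⟨k, rfl | rfl⟩
  · rcases k with _ | k
    · simp
    · simp [show 2 * (k + 1) - 1 = 2 * k + 1 by omega, pow_mul, Nat.add_mod]
  · simp [pow_succ, pow_mul, Nat.add_mod, Nat.add_div]

end Parity

section Commutators

variable {K A : Type*} [CommRing K] [Ring A] [Algebra K A]

-- For `n = 0` both coefficients vanish, so the truncated exponent `n - 1` is harmless.
theorem lie_pow_of_lie_eq {z w g : A} {a b : K} (hzw : ⁅z, w⁆ = a • 1 + b • g)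
    (hgw : g * w = -(w * g)) (n : ℕ) :
    ⁅z, w ^ n⁆ = (n * a) • w ^ (n - 1) + (b * (n % 2 : ℕ)) • (w ^ (n - 1) * g) := by
  induction n with
  | zero => simp [Ring.lie_def]
  | succ n ih =>
    rw [pow_succ, Ring.lie_mul_right, ih, hzw]
    rcases n with _ | n
    · simp
    · have hw : w ^ n * g * w = -(w ^ (n + 1) * g) := by
        rw [mul_assoc, hgw, mul_neg, ← mul_assoc, ← pow_succ]
      rw [natCast_add_one_mod_two (n + 1)]
      simp only [Nat.add_sub_cancel, add_mul, smul_mul_assoc, hw, ← pow_succ, mul_add,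
        mul_smul_comm, mul_one, smul_neg]
      push_cast
      match_scalars <;> ring

theorem lie_sq_of_lie_eq {z y u g : A} {α β : K} (hzy : ⁅z, y⁆ = α • u + β • (u * g))
    (hgz : g * z = -(z * g)) :
    ⁅z ^ 2, y⁆ = α • (2 • (z * u) - ⁅z, u⁆) + β • (⁅z, u⁆ * g) := by
  rw [pow_two, Ring.lie_mul_left, hzy]
  simp only [Ring.lie_def, mul_add, add_mul, mul_smul_comm, smul_mul_assoc, sub_mul, mul_assoc,
    hgz, mul_neg]
  module

end Commutators

theorem sra_commutator_zsq_zbar_pow_general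
    {K A : Type*} [Field K] [Ring A] [Algebra K A]
    (iK hb1 hb2 : K)
    (z zb g : A)
    (hrel : z * zb - zb * z = (iK * hb1) • ((1 : A) + (2 * hb2) • g))
    (hgz : g * z = -(z * g)) (hgzb : g * zb = -(zb * g)) (hg2 : g * g = 1)
    (p : ℕ) :
    z ^ 2 * zb ^ p - zb ^ p * z ^ 2 =
      (2 * (iK * hb1)) •
        ((p : K) • (z * zb ^ (p - 1))
          - (((p * (p - 1) / 2 : ℕ) : K) * (iK * hb1)) • zb ^ (p - 2)
          - ((2 * (iK * hb1 * hb2) * (-1 : K) ^ p) * (((p / 2 : ℕ) : K))) • (zb ^ (p - 2) * g)) := by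
  have hzzb : ⁅z, zb⁆ = (iK * hb1) • 1 + (iK * hb1 * (2 * hb2)) • g := by
    rw [Ring.lie_def, hrel, smul_add, smul_smul]
  rw [← Ring.lie_def, lie_sq_of_lie_eq (lie_pow_of_lie_eq hzzb hgzb p) hgz,
    lie_pow_of_lie_eq hzzb hgzb (p - 1), Nat.sub_sub]
  simp only [smul_sub, smul_add, add_mul, smul_mul_assoc, mul_assoc, hg2, mul_one]
  match_scalars
  · ring
  · linear_combination (-(iK * hb1) ^ 2) * natCast_mul_pred (K := K) p
      + (2 * iK * hb1 * hb2) ^ 2 * natCast_mod_two_mul_pred_mod_two (K := K) p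
  · linear_combination 2 * (iK * hb1) ^ 2 * hb2 * natCast_mod_two_mul_pred_sub (K := K) p

/-- In the formal symplectic reflection algebra `R` (relations
`[z, z̄] = iħ₁(1 + 2ħ₂γ)`, `γ` anticommuting with `z, z̄`, `γ² = 1`), for every `p ≥ 2`:
`(2iħ₁)⁻¹[z², z̄^p] = p z z̄^{p-1} − (p(p−1)/2) iħ₁ z̄^{p−2} − 2iħ₁ħ₂ (−1)^p ⌊p/2⌋ z̄^{p−2} γ`,
here stated multiplied through by `2iħ₁`.  (`⌊·⌋` is realized by natural division.) -/
theorem sra_commutator_zsq_zbar_pow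
    {K A : Type*} [Field K] [Ring A] [Algebra K A]
    (iK hb1 hb2 : K) (hi : iK * iK = -1)
    (z zb g : A)
    (hrel : z * zb - zb * z = (iK * hb1) • ((1 : A) + (2 * hb2) • g))
    (hgz : g * z = -(z * g)) (hgzb : g * zb = -(zb * g)) (hg2 : g * g = 1)
    (p : ℕ) (hp : 2 ≤ p) :
    z ^ 2 * zb ^ p - zb ^ p * z ^ 2 =
      (2 * (iK * hb1)) •
        ((p : K) • (z * zb ^ (p - 1))
          - (((p * (p - 1) / 2 : ℕ) : K) * (iK * hb1)) • zb ^ (p - 2)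
          - ((2 * (iK * hb1 * hb2) * (-1 : K) ^ p) * (((p / 2 : ℕ) : K))) • (zb ^ (p - 2) * g)) :=
  sra_commutator_zsq_zbar_pow_general iK hb1 hb2 z zb g hrel hgz hgzb hg2 p
end

section
/- In HH₀(D₂((ħ₁))((ħ₂))), for all nonnegative integers p ≠ q with p + q even, the class [z^p z̄^q] vanishes. -/
/-! Put `u = z z̄`, `c = iħ₁` and `d = 2ħ₂`. The defining relation gives `[u, z] = -c z - cd z γ` and
`[u, z̄] = c z̄ - cd z̄ γ`, so `[u, z^p z̄^q] = (q - p) c z^p z̄^q` plus a multiple of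
`z^p z̄^q γ` whose coefficient only sees the parities of `p` and `q`; it vanishes when
`p + q` is even. In that case `γ`, hence `e`, commutes with `u` and with `z^p z̄^q`, so
`[e u e, e z^p z̄^q e] = (q - p) c z^p z̄^q e`, and `(q - p) c ≠ 0`. -/

section Anticommuting

variable {A : Type*} [Ring A]

theorem mul_pow_of_mul_eq_neg {g x : A} (hgx : g * x = -(x * g)) (n : ℕ) :
    g * x ^ n = (-1 : ℤ) ^ n • (x ^ n * g) := by
  induction n with
  | zero => simp
  | succ n ih =>
    rw [pow_succ, ← mul_assoc, ih, smul_mul_assoc, mul_assoc, hgx, mul_neg, ← mul_assoc,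
      smul_neg, pow_succ]
    module

theorem commute_pow_mul_pow_of_mul_eq_neg {g x y : A} (hgx : g * x = -(x * g))
    (hgy : g * y = -(y * g)) {p q : ℕ} (hpq : Even (p + q)) :
    Commute g (x ^ p * y ^ q) := by
  rw [Commute, SemiconjBy, ← mul_assoc, mul_pow_of_mul_eq_neg hgx, smul_mul_assoc,
    mul_assoc, mul_pow_of_mul_eq_neg hgy, mul_smul_comm, smul_smul, ← pow_add,
    hpq.neg_one_pow, one_smul, mul_assoc]

variable {K : Type*} [Field K] [Algebra K A]

theorem mul_pow_of_mul_eq_add {u g x : A} {a b : K} (hgx : g * x = -(x * g))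
    (hux : u * x = x * u + a • x + b • (x * g)) (n : ℕ) :
    u * x ^ n = x ^ n * u + ((n : K) * a) • x ^ n
      + (if Even n then 0 else b) • (x ^ n * g) := by
  induction n with
  | zero => simp
  | succ n ih =>
    rw [pow_succ, ← mul_assoc, ih]
    simp only [add_mul, smul_mul_assoc, mul_assoc, hux, hgx]
    simp only [mul_add, mul_smul_comm, mul_neg, smul_neg, ← mul_assoc, ← pow_succ,
      Nat.even_add_one]
    push_cast
    split_ifs <;> module

theorem mul_mul_self_left_of_sub_eq {x y g : A} {c d : K}
    (hxy : x * y - y * x = c • (1 + d • g)) :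
    x * y * x = x * (x * y) + (-c) • x + (-(c * d)) • (x * g) := by
  have hswap : y * x = x * y - c • (1 + d • g) := by rw [← hxy]; abel
  rw [mul_assoc, hswap]
  simp only [mul_sub, mul_smul_comm, mul_add, mul_one]
  module

theorem mul_mul_self_right_of_sub_eq {x y g : A} {c d : K}
    (hxy : x * y - y * x = c • (1 + d • g)) (hgy : g * y = -(y * g)) :
    x * y * y = y * (x * y) + c • y + (-(c * d)) • (y * g) := by
  have hswap : x * y = y * x + c • (1 + d • g) := by rw [← hxy]; abel
  conv_lhs => rw [hswap]
  simp only [add_mul, mul_assoc, smul_mul_assoc, one_mul, hgy]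
  module

theorem commutator_pow_mul_pow {u g x y : A} {a a' b : K} (hgx : g * x = -(x * g))
    (hgy : g * y = -(y * g)) (hux : u * x = x * u + a • x + b • (x * g))
    (huy : u * y = y * u + a' • y + b • (y * g)) {p q : ℕ} (hpq : Even (p + q)) :
    u * (x ^ p * y ^ q) - x ^ p * y ^ q * u = ((p : K) * a + q * a') • (x ^ p * y ^ q) := by
  rw [← mul_assoc, mul_pow_of_mul_eq_add hgx hux]
  simp only [add_mul, smul_mul_assoc, mul_assoc, mul_pow_of_mul_eq_add hgy huy,
    mul_pow_of_mul_eq_neg hgy]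
  simp only [mul_add, mul_smul_comm, ← mul_assoc]
  by_cases hp : Even p
  · have hq : Even q := (Nat.even_add.mp hpq).mp hp
    simp only [hp, hq, hq.neg_one_pow, if_true]
    module
  · have hq : ¬Even q := mt (Nat.even_add.mp hpq).mpr hp
    simp only [hp, hq, (Nat.not_even_iff_odd.mp hq).neg_one_pow, if_false]
    module

theorem isIdempotentElem_inv_two_smul_one_add {g : A} (hg : g * g = 1) :
    IsIdempotentElem ((2 : K)⁻¹ • (1 + g)) := by
  have h : (2 : K)⁻¹ * 2⁻¹ * 2 = 2⁻¹ := by simpa using mul_self_mul_inv (2 : K)⁻¹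
  rw [IsIdempotentElem]
  simp only [smul_mul_assoc, mul_smul_comm, add_mul, mul_add, one_mul, mul_one, hg]
  match_scalars <;> linear_combination h

theorem IsIdempotentElem.corner_commutator {e u w : A} (he : IsIdempotentElem e)
    (hu : Commute e u) (hw : Commute e w) :
    e * u * e * (e * w * e) - e * w * e * (e * u * e) = (u * w - w * u) * e := by
  have corner {v : A} (hv : Commute e v) : e * v * e = v * e := by
    rw [hv.eq, mul_assoc, he.eq]
  have absorb {v v' : A} (hv' : Commute e v') : v * e * (v' * e) = v * v' * e := by
    rw [← mul_assoc, mul_assoc v, hv'.eq, ← mul_assoc, mul_assoc, he.eq]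
  rw [corner hu, corner hw, absorb hw, absorb hu, sub_mul]

theorem mul_mem_span_corner_commutators {e u w : A} {s : K} (he : IsIdempotentElem e)
    (hu : Commute e u) (hw : Commute e w) (huw : u * w - w * u = s • w) (hs : s ≠ 0) :
    w * e ∈ Submodule.span K
      {x : A | ∃ a b : A, (∃ r, a = e * r * e) ∧ (∃ s, b = e * s * e) ∧ x = a * b - b * a} := by
  have hcomm := he.corner_commutator hu hw
  rw [huw, smul_mul_assoc] at hcomm
  rw [← inv_smul_smul₀ hs (w * e), ← hcomm]
  exact Submodule.smul_mem _ _ (Submodule.subset_span ⟨_, _, ⟨u, rfl⟩, ⟨w, rfl⟩, rfl⟩)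

end Anticommuting

/-- In `HH₀` of the spherical subalgebra `D₂ = e·R·e` of the formal symplectic
reflection algebra `R`, for all `p ≠ q` with `p + q` even, the class `[z^p z̄^q]` vanishes,
i.e. `z^p z̄^q e` lies in the `K`-span of commutators of elements of `e·R·e`. -/
theorem sra_spherical_hh0_offdiagonal_vanishes
    {K A : Type*} [Field K] [CharZero K] [Ring A] [Algebra K A]
    (iK hb1 hb2 : K) (hi : iK * iK = -1) (hhb1 : hb1 ≠ 0)
    (z zb g : A)
    (hrel : z * zb - zb * z = (iK * hb1) • ((1 : A) + (2 * hb2) • g))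
    (hgz : g * z = -(z * g)) (hgzb : g * zb = -(zb * g)) (hg2 : g * g = 1)
    (e : A) (he : e = ((2 : K)⁻¹) • ((1 : A) + g))
    (p q : ℕ) (hne : p ≠ q) (hev : Even (p + q)) :
    z ^ p * zb ^ q * e ∈
      Submodule.span K
        {x : A | ∃ a b : A, (∃ r, a = e * r * e) ∧ (∃ s, b = e * s * e) ∧ x = a * b - b * a} := by
  set c := iK * hb1
  have hc : c ≠ 0 := mul_ne_zero (by rintro rfl; simp at hi) hhb1
  have hcomm {v : A} (hv : Commute g v) : Commute e v :=
    he ▸ ((Commute.one_left v).add_left hv).smul_left _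
  have hgu : Commute g (z * zb) := by
    simpa using commute_pow_mul_pow_of_mul_eq_neg hgz hgzb (p := 1) (q := 1) even_two
  have hs : (p : K) * -c + q * c ≠ 0 := by
    rw [mul_neg, neg_add_eq_sub, ← sub_mul]
    exact mul_ne_zero (sub_ne_zero.mpr (Nat.cast_injective.ne hne.symm)) hc
  exact mul_mem_span_corner_commutators (he ▸ isIdempotentElem_inv_two_smul_one_add hg2)
    (hcomm hgu) (hcomm (commute_pow_mul_pow_of_mul_eq_neg hgz hgzb hev))
    (commutator_pow_mul_pow hgz hgzb (mul_mul_self_left_of_sub_eq hrel)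
      (mul_mul_self_right_of_sub_eq hrel hgzb) hev) hs
end

section
/- Any K-linear trace τ on the spherical subalgebra D₂((ħ₁))((ħ₂)) with τ(1) = 1 satisfies, for every Z₂-invariant polynomial f ∈ C[z, z̄]^{Z₂}, the formula τ(f) = Σ_{k=0}^{∞} (iħ₁)^k/(k!)² · (Π_{l=1}^{k} ( l/2 + (−1)^{l+1}·2⌊(l+1)/2⌋ħ₂/(l+1) )) · ∂^{2k}f/∂z^k∂z̄^k (0,0). In particular, the normalized trace on polynomial elements is unique. -/
/-! **Statement 8.** Uniqueness of the normalized trace on the spherical subalgebra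
`D₂((ħ₁))((ħ₂)) = e·R·e` of the formal symplectic reflection algebra `R`: any `K`-linear
trace `τ` with `τ(1) = 1` (the unit of `e·R·e` being `e`) is given on `Z₂`-invariant
polynomials by the explicit formula
`τ(f) = Σ_k (iħ₁)^k/(k!)² (Π_{l=1}^k (l/2 + (−1)^{l+1} 2⌊(l+1)/2⌋ħ₂/(l+1))) ∂^{2k}f/∂z^k∂z̄^k(0,0)`.
Invariant polynomials `Σ a_{pq} z^p z̄^q` are encoded by coefficients `f : ℕ × ℕ →₀ K`
supported on monomials of even total degree, and since
`∂^{2k}(z^p z̄^q)/∂z^k∂z̄^k (0,0) = (k!)² δ_{pk}δ_{qk}`, the right-hand side is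
`Σ_k (iħ₁)^k (Π_{l=1}^k (...)) a_{kk}`. -/

noncomputable section

open FreeAlgebra

/-- The defining relations of the formal symplectic reflection algebra `R`:
`[z, z̄] = iħ₁(1 + 2ħ₂γ)`, `γz = -zγ`, `γz̄ = -z̄γ`, `γ² = 1`
(generators `0 ↦ z`, `1 ↦ z̄`, `2 ↦ γ`). -/
inductive SRARel (K : Type) [Field K] (iK hb1 hb2 : K) :
    FreeAlgebra K (Fin 3) → FreeAlgebra K (Fin 3) → Prop
  | comm : SRARel K iK hb1 hb2
      (ι K (0 : Fin 3) * ι K (1 : Fin 3) - ι K (1 : Fin 3) * ι K (0 : Fin 3))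
      ((iK * hb1) • (1 + (2 * hb2) • ι K (2 : Fin 3)))
  | gz : SRARel K iK hb1 hb2 (ι K (2 : Fin 3) * ι K (0 : Fin 3))
      (-(ι K (0 : Fin 3) * ι K (2 : Fin 3)))
  | gzb : SRARel K iK hb1 hb2 (ι K (2 : Fin 3) * ι K (1 : Fin 3))
      (-(ι K (1 : Fin 3) * ι K (2 : Fin 3)))
  | gsq : SRARel K iK hb1 hb2 (ι K (2 : Fin 3) * ι K (2 : Fin 3)) 1

variable (K : Type) [Field K] (iK hb1 hb2 : K)

/-- The formal symplectic reflection algebra `R`. -/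
abbrev SRA := RingQuot (SRARel K iK hb1 hb2)

def SRA.z : SRA K iK hb1 hb2 := RingQuot.mkAlgHom K _ (ι K (0 : Fin 3))
def SRA.zb : SRA K iK hb1 hb2 := RingQuot.mkAlgHom K _ (ι K (1 : Fin 3))
def SRA.g : SRA K iK hb1 hb2 := RingQuot.mkAlgHom K _ (ι K (2 : Fin 3))

/-- The symmetrizing idempotent `e = (1 + γ)/2`. -/
def SRA.e : SRA K iK hb1 hb2 := ((2 : K)⁻¹) • (1 + SRA.g K iK hb1 hb2)

/-- The element of the spherical subalgebra `e·R·e` corresponding to a polynomial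
`f = Σ a_{pq} z^p z̄^q` (encoded by its coefficients). -/
def SRA.toR (f : ℕ × ℕ →₀ K) : SRA K iK hb1 hb2 :=
  f.sum fun pq c =>
    c • (SRA.z K iK hb1 hb2 ^ pq.1 * SRA.zb K iK hb1 hb2 ^ pq.2 * SRA.e K iK hb1 hb2)

/-- `(iħ₁)^k · Π_{l=1}^{k} ( l/2 + (−1)^{l+1}·2⌊(l+1)/2⌋·ħ₂/(l+1) )`. -/
def traceCoeff (k : ℕ) : K :=
  (iK * hb1) ^ k * ∏ l ∈ Finset.Icc 1 k,
    ((l : K) / 2 + (-1 : K) ^ (l + 1) * (2 * (((l + 1) / 2 : ℕ) : K) * hb2) / ((l : K) + 1))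

/-- The right-hand side of the trace formula, in coefficient form. -/
def phi (f : ℕ × ℕ →₀ K) : K :=
  f.sum fun pq c => if pq.1 = pq.2 then traceCoeff K iK hb1 hb2 pq.1 * c else 0


/-! Write `c = iħ₁`. Since `γ` anticommutes with `z` and `z̄` and `γ e = e`, the element
`z^a z̄^b e` is a `γ`-eigenvector with eigenvalue `(-1)^(a+b)`; for `a + b` even it therefore
lies in `e R e`. On a `γ`-eigenvector `v` with eigenvalue `ε` the commutation relation moves
`z̄^(n+1)` past `z` at the cost of the term `c (n + 1 + ħ₂ (1 - (-1)^(n+1)) ε) z̄^n v`, in which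
`γ` no longer occurs. The trace property for the pair `z² e`, `z^a z̄^(b+2) e` then yields
`τ(z^(a+1) z̄^(b+1) e) = c ρ(b+1) τ(z^a z̄^b e)`, with `ρ(l)` the `l`-th factor of the product
in the formula, while the pairs `(z² e, z^a z̄ e)` and `(z̄² e, z z̄^b e)` force
`τ(z^(a+1) e) = τ(z̄^(b+1) e) = 0`. Induction on the degree, starting from `τ(e) = 1`, gives
`τ(z^p z̄^q e) = δ_pq (iħ₁)^p ρ(1) ⋯ ρ(p)`. -/

theorem mul_pow_mul_eq_smul_of_anticomm {R A : Type*} [CommRing R] [Ring A] [Algebra R A]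
    {g x v : A} {ε : R} (hx : g * x = -(x * g)) (hv : g * v = ε • v) (n : ℕ) :
    g * (x ^ n * v) = ((-1) ^ n * ε) • (x ^ n * v) := by
  have hsemi : SemiconjBy g x (-x) := by rw [SemiconjBy, hx, neg_mul]
  rw [← mul_assoc, (hsemi.pow_right n).eq, mul_assoc, hv, neg_pow, mul_smul_comm, mul_assoc,
    mul_comm _ ε, mul_smul, Algebra.smul_def ((-1 : R) ^ n), map_pow, map_neg, map_one]

def traceFactor (l : ℕ) : K :=
  (l : K) / 2 + (-1 : K) ^ (l + 1) * (2 * (((l + 1) / 2 : ℕ) : K) * hb2) / ((l : K) + 1)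

theorem traceCoeff_succ (k : ℕ) :
    traceCoeff K iK hb1 hb2 (k + 1)
      = iK * hb1 * traceFactor K hb2 (k + 1) * traceCoeff K iK hb1 hb2 k := by
  rw [traceCoeff, traceCoeff, Finset.prod_Icc_succ_top (Nat.le_add_left 1 k), pow_succ,
    traceFactor]
  ring

theorem two_mul_traceFactor_succ [CharZero K] (k : ℕ) :
    2 * (k + 2) * traceFactor K hb2 (k + 1)
      = (k + 2) * (k + 1) + hb2 * (1 + (2 * k + 3) * (-1) ^ k) := by
  rw [traceFactor]
  rcases Nat.even_or_odd' k with ⟨m, rfl | rfl⟩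
  · have hm : (2 * (m : K) + 1 + 1) ≠ 0 := by exact_mod_cast (by omega : 2 * m + 1 + 1 ≠ 0)
    rw [show (2 * m + 1 + 1) / 2 = m + 1 by omega]
    simp only [pow_succ, pow_mul]
    push_cast
    field_simp
    ring
  · have hm : (2 * (m : K) + 1 + 1 + 1) ≠ 0 := by
      exact_mod_cast (by omega : 2 * m + 1 + 1 + 1 ≠ 0)
    rw [show (2 * m + 1 + 1 + 1) / 2 = m + 1 by omega]
    simp only [pow_succ, pow_mul]
    push_cast
    field_simp
    ring

namespace SRA

def monomial (a b : ℕ) : SRA K iK hb1 hb2 :=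
  SRA.z K iK hb1 hb2 ^ a * SRA.zb K iK hb1 hb2 ^ b * SRA.e K iK hb1 hb2

variable {K iK hb1 hb2}

def IsSphericalTrace (τ : SRA K iK hb1 hb2 →ₗ[K] K) : Prop :=
  ∀ a b : SRA K iK hb1 hb2,
    (∃ r, a = SRA.e K iK hb1 hb2 * r * SRA.e K iK hb1 hb2) →
    (∃ s, b = SRA.e K iK hb1 hb2 * s * SRA.e K iK hb1 hb2) → τ (a * b - b * a) = 0

local notation "Z" => SRA.z K iK hb1 hb2
local notation "Zb" => SRA.zb K iK hb1 hb2
local notation "G" => SRA.g K iK hb1 hb2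
local notation "E" => SRA.e K iK hb1 hb2
local notation "M" => SRA.monomial K iK hb1 hb2

theorem zb_mul_z : Zb * Z = Z * Zb - (iK * hb1) • (1 + (2 * hb2) • G) := by
  have h : Z * Zb - Zb * Z = (iK * hb1) • (1 + (2 * hb2) • G) := by
    simpa [SRA.z, SRA.zb, SRA.g] using RingQuot.mkAlgHom_rel K (@SRARel.comm K _ iK hb1 hb2)
  rw [← h, sub_sub_cancel]

theorem g_mul_z : G * Z = -(Z * G) := by
  simpa [SRA.z, SRA.g] using RingQuot.mkAlgHom_rel K (@SRARel.gz K _ iK hb1 hb2)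

theorem g_mul_zb : G * Zb = -(Zb * G) := by
  simpa [SRA.zb, SRA.g] using RingQuot.mkAlgHom_rel K (@SRARel.gzb K _ iK hb1 hb2)

theorem g_mul_g : G * G = 1 := by
  simpa [SRA.g] using RingQuot.mkAlgHom_rel K (@SRARel.gsq K _ iK hb1 hb2)

theorem g_mul_e : G * E = E := by
  rw [SRA.e, mul_smul_comm, mul_add, mul_one, g_mul_g, add_comm]

theorem e_mul_of_g_mul [NeZero (2 : K)] {v : SRA K iK hb1 hb2} (hv : G * v = v) :
    E * v = v := by
  rw [SRA.e, smul_mul_assoc, add_mul, one_mul, hv, ← two_smul K v, smul_smul,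
    inv_mul_cancel₀ (NeZero.ne 2), one_smul]

section Eigenvector

variable {v : SRA K iK hb1 hb2} {ε : K}

theorem zb_mul_z_mul (hv : G * v = ε • v) :
    Zb * (Z * v) = Z * (Zb * v) - (iK * hb1 * (1 + 2 * hb2 * ε)) • v := by
  rw [← mul_assoc, zb_mul_z, sub_mul, smul_mul_assoc, add_mul, one_mul, smul_mul_assoc, hv,
    mul_assoc]
  module

theorem zb_pow_succ_mul_z_mul (hv : G * v = ε • v) (n : ℕ) :
    Zb ^ (n + 1) * (Z * v) = Z * (Zb ^ (n + 1) * v)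
      - (iK * hb1 * (n + 1 + hb2 * (1 - (-1) ^ (n + 1)) * ε)) • (Zb ^ n * v) := by
  induction n with
  | zero => rw [zero_add, pow_one, zb_mul_z_mul hv, pow_zero, one_mul]; module
  | succ n ih =>
    have hzbv := mul_pow_mul_eq_smul_of_anticomm g_mul_zb hv (n + 1)
    rw [pow_succ' Zb (n + 1), mul_assoc, ih, mul_sub, mul_smul_comm, ← mul_assoc Zb (Zb ^ n),
      ← pow_succ', zb_mul_z_mul hzbv, ← mul_assoc Zb (Zb ^ (n + 1)), ← pow_succ']
    module

theorem zb_mul_z_sq_mul (hv : G * v = ε • v) :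
    Zb * (Z ^ 2 * v) = Z ^ 2 * (Zb * v) - (2 * (iK * hb1)) • (Z * v) := by
  have hzv := mul_pow_mul_eq_smul_of_anticomm g_mul_z hv 1
  rw [pow_one] at hzv
  rw [sq, mul_assoc, zb_mul_z_mul hzv, zb_mul_z_mul hv, mul_sub, mul_smul_comm, ← mul_assoc Z Z]
  module

theorem zb_sq_mul_z_mul (hv : G * v = ε • v) :
    Zb ^ 2 * (Z * v) = Z * (Zb ^ 2 * v) - (2 * (iK * hb1)) • (Zb * v) := by
  rw [zb_pow_succ_mul_z_mul hv 1, pow_one]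
  module

theorem zb_pow_add_two_mul_z_sq_mul (hv : G * v = ε • v) (n : ℕ) :
    Zb ^ (n + 2) * (Z ^ 2 * v) = Z ^ 2 * (Zb ^ (n + 2) * v)
      - (2 * (n + 2) * (iK * hb1)) • (Z * (Zb ^ (n + 1) * v))
      + ((iK * hb1) ^ 2 * ((n + 2) * (n + 1) + hb2 * (1 + (2 * n + 3) * (-1) ^ n) * ε))
        • (Zb ^ n * v) := by
  have hzv := mul_pow_mul_eq_smul_of_anticomm g_mul_z hv 1
  rw [pow_one] at hzv
  rw [sq, mul_assoc, zb_pow_succ_mul_z_mul hzv (n + 1), zb_pow_succ_mul_z_mul hv (n + 1),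
    zb_pow_succ_mul_z_mul hv n, mul_sub, mul_smul_comm, ← mul_assoc Z Z]
  have hsq : ((-1 : K) ^ n) ^ 2 = 1 := by rw [pow_right_comm, neg_one_sq, one_pow]
  match_scalars
  · ring
  · ring
  · linear_combination (iK * hb1) ^ 2 * hb2 ^ 2 * ε ^ 2 * hsq

end Eigenvector

theorem g_mul_monomial {a b : ℕ} (h : Even (a + b)) : G * M a b = M a b := by
  rw [monomial, mul_assoc, mul_pow_mul_eq_smul_of_anticomm g_mul_z
      (mul_pow_mul_eq_smul_of_anticomm g_mul_zb (g_mul_e.trans (one_smul K E).symm) b) a,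
    mul_one, ← mul_assoc, ← pow_add, h.neg_one_pow, one_smul]

section Spherical

variable [NeZero (2 : K)] {a b c d : ℕ}

theorem e_mul_monomial (h : Even (a + b)) : E * M a b = M a b :=
  e_mul_of_g_mul (g_mul_monomial h)

theorem monomial_eq_e_mul_mul_e (h : Even (a + b)) : M a b = E * (Z ^ a * Zb ^ b) * E := by
  rw [mul_assoc, ← monomial, e_mul_monomial h]

theorem monomial_mul_monomial (h : Even (c + d)) :
    M a b * M c d = Z ^ a * Zb ^ b * Z ^ c * Zb ^ d * E := by
  rw [monomial, mul_assoc _ E, e_mul_monomial h, monomial]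
  simp only [mul_assoc]

theorem monomial_two_zero_mul_monomial (h : Even (a + b)) : M 2 0 * M a b = M (a + 2) b := by
  rw [monomial_mul_monomial h, pow_zero, mul_one, ← pow_add, add_comm, monomial]

theorem monomial_mul_monomial_two_zero (a n : ℕ) :
    M a (n + 2) * M 2 0 = M (a + 2) (n + 2) - (2 * (n + 2) * (iK * hb1)) • M (a + 1) (n + 1)
      + ((iK * hb1) ^ 2 * ((n + 2) * (n + 1) + hb2 * (1 + (2 * n + 3) * (-1) ^ n))) • M a n := by
  rw [monomial_mul_monomial even_two, pow_zero, mul_one]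
  simp only [monomial, mul_assoc]
  rw [zb_pow_add_two_mul_z_sq_mul (g_mul_e.trans (one_smul K E).symm), mul_one]
  simp only [mul_add, mul_sub, mul_smul_comm, ← mul_assoc, ← pow_add, ← pow_succ]

theorem monomial_one_mul_monomial_two_zero (a : ℕ) :
    M a 1 * M 2 0 = M (a + 2) 1 - (2 * (iK * hb1)) • M (a + 1) 0 := by
  rw [monomial_mul_monomial even_two, pow_zero, mul_one]
  simp only [monomial, mul_assoc, pow_one, pow_zero, one_mul]
  rw [zb_mul_z_sq_mul (g_mul_e.trans (one_smul K E).symm)]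
  simp only [mul_sub, mul_smul_comm, ← mul_assoc, ← pow_add, ← pow_succ]

theorem monomial_zero_two_mul_monomial (h : Even (1 + b)) :
    M 0 2 * M 1 b = M 1 (b + 2) - (2 * (iK * hb1)) • M 0 (b + 1) := by
  rw [monomial_mul_monomial h]
  simp only [monomial, mul_assoc, pow_one, pow_zero, one_mul]
  rw [zb_sq_mul_z_mul
    (mul_pow_mul_eq_smul_of_anticomm g_mul_zb (g_mul_e.trans (one_smul K E).symm) b)]
  simp only [← mul_assoc, ← pow_add, ← pow_succ']
  rw [add_comm 2 b]

theorem monomial_one_mul_monomial_zero_two (b : ℕ) : M 1 b * M 0 2 = M 1 (b + 2) := by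
  rw [monomial_mul_monomial even_two, pow_zero, mul_one, mul_assoc _ (Zb ^ b), ← pow_add,
    monomial]

variable {τ : SRA K iK hb1 hb2 →ₗ[K] K} (hτ : IsSphericalTrace τ)
include hτ

theorem trace_monomial_mul_comm (hab : Even (a + b)) (hcd : Even (c + d)) :
    τ (M a b * M c d) = τ (M c d * M a b) := by
  rw [← sub_eq_zero, ← map_sub]
  exact hτ _ _ ⟨_, monomial_eq_e_mul_mul_e hab⟩ ⟨_, monomial_eq_e_mul_mul_e hcd⟩

theorem trace_monomial_succ_zero (hc : iK * hb1 ≠ 0) (ha : Odd a) : τ (M (a + 1) 0) = 0 := by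
  have ha' : Even (a + 1) := by simpa [Nat.even_add_one] using ha
  have h := trace_monomial_mul_comm hτ (a := 2) (b := 0) even_two ha'
  rw [monomial_two_zero_mul_monomial ha', monomial_one_mul_monomial_two_zero,
    map_sub, map_smul, smul_eq_mul, eq_comm, sub_eq_self] at h
  exact (mul_eq_zero.mp h).resolve_left (mul_ne_zero two_ne_zero hc)

theorem trace_monomial_zero_succ (hc : iK * hb1 ≠ 0) (hb : Odd b) : τ (M 0 (b + 1)) = 0 := by
  have hb' : Even (1 + b) := by simpa [Nat.even_add_one, add_comm 1 b] using hb
  have h := trace_monomial_mul_comm hτ (a := 0) (b := 2) even_two hb'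
  rw [monomial_zero_two_mul_monomial hb', monomial_one_mul_monomial_zero_two, map_sub, map_smul,
    smul_eq_mul, sub_eq_self] at h
  exact (mul_eq_zero.mp h).resolve_left (mul_ne_zero two_ne_zero hc)

end Spherical

section CharZero

variable [CharZero K] {τ : SRA K iK hb1 hb2 →ₗ[K] K} (hτ : IsSphericalTrace τ)
include hτ

theorem trace_monomial_succ_succ (hc : iK * hb1 ≠ 0) {a b : ℕ} (h : Even (a + b)) :
    τ (M (a + 1) (b + 1)) = iK * hb1 * traceFactor K hb2 (b + 1) * τ (M a b) := by
  have hab : Even (a + (b + 2)) := by rw [← add_assoc]; exact h.add even_two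
  have hcomm := trace_monomial_mul_comm hτ (a := 2) (b := 0) even_two hab
  rw [monomial_two_zero_mul_monomial hab, monomial_mul_monomial_two_zero, map_add, map_sub,
    map_smul, map_smul, smul_eq_mul, smul_eq_mul] at hcomm
  have hb : (b + 2 : K) ≠ 0 := by exact_mod_cast Nat.succ_ne_zero (b + 1)
  apply mul_left_cancel₀ (mul_ne_zero (mul_ne_zero two_ne_zero hb) hc)
  linear_combination hcomm - (iK * hb1) ^ 2 * τ (M a b) * two_mul_traceFactor_succ K hb2 b

theorem trace_monomial (hc : iK * hb1 ≠ 0) (hnorm : τ E = 1) :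
    ∀ a b : ℕ, Even (a + b) → τ (M a b) = if a = b then traceCoeff K iK hb1 hb2 a else 0
  | 0, 0, _ => by simp [monomial, hnorm, traceCoeff]
  | 0, b + 1, h => by
    rw [trace_monomial_zero_succ hτ hc (by simpa [Nat.even_add_one] using h),
      if_neg b.succ_ne_zero.symm]
  | a + 1, 0, h => by
    rw [trace_monomial_succ_zero hτ hc (by simpa [Nat.even_add_one] using h),
      if_neg a.succ_ne_zero]
  | a + 1, b + 1, h => by
    have hev : Even (a + b) := by
      simpa [← add_assoc, add_right_comm a 1 b, Nat.even_add_one] using h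
    rw [trace_monomial_succ_succ hτ hc hev, trace_monomial hc hnorm a b hev]
    by_cases hab : a = b
    · rw [hab, if_pos rfl, if_pos rfl, traceCoeff_succ]
    · rw [if_neg hab, if_neg (by omega), mul_zero]

end CharZero

end SRA

/-- Any `K`-linear trace on `D₂((ħ₁))((ħ₂)) = e·R·e` normalized by
`τ(e) = 1` is given on invariant polynomials by the explicit formula; in particular the
normalized trace is unique on polynomial elements. -/
theorem normalized_trace_unique [CharZero K] (hi : iK * iK = -1) (hhb1 : hb1 ≠ 0)
    (τ : SRA K iK hb1 hb2 →ₗ[K] K)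
    (htrace : ∀ a b : SRA K iK hb1 hb2,
      (∃ r, a = SRA.e K iK hb1 hb2 * r * SRA.e K iK hb1 hb2) →
      (∃ s, b = SRA.e K iK hb1 hb2 * s * SRA.e K iK hb1 hb2) →
      τ (a * b - b * a) = 0)
    (hnorm : τ (SRA.e K iK hb1 hb2) = 1) :
    ∀ f : ℕ × ℕ →₀ K, (∀ pq ∈ f.support, Even (pq.1 + pq.2)) →
      τ (SRA.toR K iK hb1 hb2 f) = phi K iK hb1 hb2 f := by
  intro f hf
  have hiK : iK ≠ 0 := by rintro rfl; simp at hi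
  rw [SRA.toR, phi, map_finsuppSum]
  refine Finsupp.sum_congr fun pq hpq => ?_
  rw [map_smul, smul_eq_mul, ← SRA.monomial,
    SRA.trace_monomial htrace (mul_ne_zero hiK hhb1) hnorm pq.1 pq.2 (hf pq hpq)]
  split_ifs <;> ring

end
end

section
/- Let φ be the normalized trace on the Dunkl–Weyl algebra and let ψ_{2n−2} be defined on the tensor product algebra W_{n−1}((ħ₁)) ⊗ D_K((ħ₁))((ħ₂)) by ψ_{2n−2}(a₀⊗b₀, …, a_{2n−2}⊗b_{2n−2}) = τ_{2n−2}(a₀,…,a_{2n−2})·φ(b₀ ⋆ ⋯ ⋆ b_{2n−2}), where τ_{2n−2} is a normalized sp_{2n−2}-basic Hochschild cocycle of the Weyl algebra W_{n−1}((ħ₁)). Then ψ_{2n−2} is a Hochschild (2n−2)-cocycle, and it is basic with respect to the Lie algebra sp_{2n−2} ⊕ u₁ embedded via A ⊕ α ↦ (1/2)Σ a_{ij}w_i w_j ⊗ 1 + 1 ⊗ α z z̄: for any γ in the image of this embedding, both Σ_j ψ_{2n−2}(…, [γ, a_j⊗b_j]_{ħ₁}, …) = 0 and Σ_j ψ_{2n−2}(a₀⊗b₀,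 …, γ, a_j⊗b_j, …) = 0 (with 2n−2 total entries after γ insertion). -/
open scoped TensorProduct

/-- The tuple obtained from `(a₀, …, a_{d+1})` by multiplying the adjacent entries at
positions `i, i+1`. -/
def hochMerge {A : Type*} [Mul A] {d : ℕ} (a : Fin (d + 2) → A) (i : Fin (d + 1)) :
    Fin (d + 1) → A := fun j =>
  if (j : ℕ) < (i : ℕ) then a (Fin.castSucc j)
  else if (j : ℕ) = (i : ℕ) then a (Fin.castSucc j) * a j.succ
  else a j.succ

/-- The tuple `(a_{d+1}·a₀, a₁, …, a_d)`. -/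
def hochCyc {A : Type*} [Mul A] {d : ℕ} (a : Fin (d + 2) → A) : Fin (d + 1) → A := fun j =>
  if j = 0 then a (Fin.last (d + 1)) * a 0 else a (Fin.castSucc j)

/-- A Hochschild `d`-cocycle of an algebra `A` with values in the dual `A*`, viewed as a
multilinear functional on `d + 1` arguments `(a₀, …, a_d)` killed by the Hochschild
coboundary. -/
def IsHochschildCocycle {K A : Type*} [CommRing K] [Ring A] [Algebra K A] {d : ℕ}
    (φ : MultilinearMap K (fun _ : Fin (d + 1) => A) K) : Prop :=
  ∀ a : Fin (d + 2) → A,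
    (∑ i : Fin (d + 1), (-1 : K) ^ (i : ℕ) • φ (hochMerge a i)) +
      (-1 : K) ^ (d + 1) • φ (hochCyc a) = 0

/-!
All three identities are additive in each argument from `W ⊗ D`, so it is enough to check them
on tuples of pure tensors `aⱼ ⊗ bⱼ`, where `ψ` is `τ(a) · φ(b₀ ⋯ b_d)`. Merging two adjacent
factors does not change the product `b₀ ⋯ b_{d+1}`, and neither does the cyclic term once `φ` is
a trace, so the coboundary of `ψ` is the coboundary of `τ` times `φ(b₀ ⋯ b_{d+1})`. The Lie
derivative along `s ⊗ 1 + 1 ⊗ u` is the Lie derivative of `τ` along `s` times `φ(b₀ ⋯ b_d)`, plus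
`τ(a) · φ([u, b₀ ⋯ b_d])` by the Leibniz rule, and a trace kills commutators. In the contraction,
`1 ⊗ u` puts `1` into a nonzero slot of the normalized cochain `τ`.
-/

open Function

section Multiadditive

variable {M P : Type*} [AddZeroClass M] [AddCommMonoid P] {n : ℕ}

def IsMultiadditive (F : (Fin n → M) → P) : Prop :=
  ∀ a k x y, F (update a k (x + y)) = F (update a k x) + F (update a k y)

theorem IsMultiadditive.add {F G : (Fin n → M) → P} (hF : IsMultiadditive F)
    (hG : IsMultiadditive G) : IsMultiadditive fun a => F a + G a := by
  intro a k x y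
  dsimp only
  rw [hF, hG, add_add_add_comm]

theorem IsMultiadditive.const_smul {R : Type*} [Monoid R] [DistribMulAction R P]
    {F : (Fin n → M) → P} (hF : IsMultiadditive F) (c : R) :
    IsMultiadditive fun a => c • F a := by
  intro a k x y
  dsimp only
  rw [hF, smul_add]

theorem IsMultiadditive.sum {ι : Type*} (s : Finset ι) {F : ι → (Fin n → M) → P}
    (hF : ∀ i ∈ s, IsMultiadditive (F i)) : IsMultiadditive fun a => ∑ i ∈ s, F i a := by
  intro a k x y
  rw [← Finset.sum_add_distrib]
  exact Finset.sum_congr rfl fun i hi => hF i hi a k x y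

def IsSlotwiseAdditive {n' : ℕ} (G : (Fin n → M) → Fin n' → M) : Prop :=
  ∀ a k, ∃ (k' : Fin n') (L : M →+ M), ∀ v, G (update a k v) = update (G a) k' (L v)

theorem isSlotwiseAdditive_update_apply (j : Fin n) (L : M →+ M) :
    IsSlotwiseAdditive fun a : Fin n → M => update a j (L (a j)) := by
  intro a k
  by_cases hk : k = j
  · subst hk
    exact ⟨k, L, fun v => by simp⟩
  · exact ⟨k, AddMonoidHom.id M, fun v => by simp [update_of_ne (Ne.symm hk), update_comm hk]⟩

theorem isSlotwiseAdditive_insertNth (j : Fin (n + 1)) (x : M) :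
    IsSlotwiseAdditive fun a : Fin n → M => j.insertNth x a :=
  fun _ k => ⟨j.succAbove k, AddMonoidHom.id M, fun _ => Fin.insertNth_update ..⟩

end Multiadditive

theorem MultilinearMap.isMultiadditive_comp {R M N : Type*} [Semiring R] [AddCommMonoid M]
    [Module R M] [AddCommMonoid N] [Module R N] {n n' : ℕ}
    (ψ : MultilinearMap R (fun _ : Fin n' => M) N) {G : (Fin n → M) → Fin n' → M}
    (hG : IsSlotwiseAdditive G) : IsMultiadditive fun a => ψ (G a) := by
  intro a k x y
  obtain ⟨k', L, hL⟩ := hG a k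
  simp only [hL, map_add, ψ.map_update_add]

theorem IsMultiadditive.eq_zero_of_tmul {R M N P : Type*} [CommSemiring R] [AddCommMonoid M]
    [Module R M] [AddCommMonoid N] [Module R N] [AddCommMonoid P] {n : ℕ}
    {F : (Fin n → M ⊗[R] N) → P} (hF : IsMultiadditive F)
    (hpure : ∀ (x : Fin n → M) (y : Fin n → N), F (fun j => x j ⊗ₜ y j) = 0)
    (a : Fin n → M ⊗[R] N) : F a = 0 := by
  classical
  suffices ∀ s : Finset (Fin n), ∀ a : Fin n → M ⊗[R] N,
      (∀ j ∉ s, ∃ x y, a j = x ⊗ₜ[R] y) → F a = 0 from this Finset.univ a (by simp)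
  intro s
  induction s using Finset.induction_on with
  | empty =>
    intro a ha
    choose x y hxy using fun j => ha j (Finset.notMem_empty j)
    rw [funext hxy]
    exact hpure x y
  | insert k s _ ih =>
    intro a ha
    have hk : ∀ x y, F (update a k (x ⊗ₜ y)) = 0 := fun x y => ih _ fun j hj => by
      by_cases hjk : j = k
      · exact ⟨x, y, hjk ▸ update_self ..⟩
      · rw [update_of_ne hjk]
        exact ha j (by simp [hjk, hj])
    have hk' : ∀ t, F (update a k t) = 0 := fun t => by
      induction t using TensorProduct.induction_on with
      | zero => simpa using hk 0 0
      | tmul x y => exact hk x y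
      | add x y hx hy => rw [hF, hx, hy, add_zero]
    simpa using hk' (a k)

section TensorProduct

variable {R M N : Type*} [CommSemiring R] [AddCommMonoid M] [Module R M] [AddCommMonoid N]
  [Module R N] {n : ℕ}

theorem update_tmul (x : Fin n → M) (y : Fin n → N) (j : Fin n) (v : M) (w : N) :
    update (fun i => x i ⊗ₜ[R] y i) j (v ⊗ₜ w) = fun i => update x j v i ⊗ₜ update y j w i :=
  funext fun i => (apply_update₂ (fun _ => (· ⊗ₜ[R] ·)) x y j v w i).symm

theorem insertNth_tmul (j : Fin (n + 1)) (v : M) (w : N) (x : Fin n → M) (y : Fin n → N) :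
    j.insertNth (v ⊗ₜ[R] w) (fun i => x i ⊗ₜ y i) = fun i =>
      (j.insertNth v x : Fin (n + 1) → M) i ⊗ₜ (j.insertNth w y : Fin (n + 1) → N) i := by
  funext i
  cases i using j.succAboveCases <;> simp

end TensorProduct

theorem isSlotwiseAdditive_hochMerge {A : Type*} [NonUnitalNonAssocSemiring A] {d : ℕ}
    (i : Fin (d + 1)) : IsSlotwiseAdditive fun a : Fin (d + 2) → A => hochMerge a i := by
  intro a k
  obtain h | h | h | h : (k : ℕ) < i ∨ (k : ℕ) = i ∨ (k : ℕ) = i + 1 ∨ (i : ℕ) + 1 < k := by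
    omega
  on_goal 1 => refine ⟨⟨k, by omega⟩, AddMonoidHom.id A, ?_⟩
  on_goal 2 => refine ⟨i, AddMonoidHom.mulRight (a i.succ), ?_⟩
  on_goal 3 => refine ⟨i, AddMonoidHom.mulLeft (a i.castSucc), ?_⟩
  on_goal 4 => refine ⟨⟨k - 1, by omega⟩, AddMonoidHom.id A, ?_⟩
  all_goals
    intro v
    funext j
    simp only [hochMerge, update_apply, Fin.ext_iff, Fin.val_castSucc, Fin.val_succ,
      AddMonoidHom.id_apply, AddMonoidHom.coe_mulRight, AddMonoidHom.coe_mulLeft]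
    split_ifs <;> grind [Fin.ext_iff]

theorem isSlotwiseAdditive_hochCyc {A : Type*} [NonUnitalNonAssocSemiring A] {d : ℕ} :
    IsSlotwiseAdditive fun a : Fin (d + 2) → A => hochCyc a := by
  intro a k
  obtain h | h | h : k = 0 ∨ k = Fin.last _ ∨ k ≠ 0 ∧ k ≠ Fin.last _ := by tauto
  on_goal 1 => refine ⟨0, AddMonoidHom.mulLeft (a (Fin.last _)), ?_⟩
  on_goal 2 => refine ⟨0, AddMonoidHom.mulRight (a 0), ?_⟩
  on_goal 3 => refine ⟨k.castPred h.2, AddMonoidHom.id A, ?_⟩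
  all_goals
    intro v
    funext j
    simp only [hochCyc, update_apply, Fin.ext_iff, Fin.val_castSucc, Fin.val_last,
      Fin.coe_castPred, AddMonoidHom.id_apply, AddMonoidHom.coe_mulRight,
      AddMonoidHom.coe_mulLeft]
    split_ifs <;> grind [Fin.ext_iff]

theorem isMultiadditive_hochschildCoboundary {K A : Type*} [CommRing K] [Ring A] [Module K A]
    {d : ℕ} (φ : MultilinearMap K (fun _ : Fin (d + 1) => A) K) :
    IsMultiadditive fun a : Fin (d + 2) → A =>
      (∑ i : Fin (d + 1), (-1 : K) ^ (i : ℕ) • φ (hochMerge a i)) +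
        (-1 : K) ^ (d + 1) • φ (hochCyc a) :=
  (IsMultiadditive.sum _ fun i _ =>
    (φ.isMultiadditive_comp (isSlotwiseAdditive_hochMerge i)).const_smul _).add
    ((φ.isMultiadditive_comp isSlotwiseAdditive_hochCyc).const_smul _)

section Monoid

variable {A : Type*} [Monoid A]

theorem hochMerge_zero {d : ℕ} (a : Fin (d + 2) → A) :
    hochMerge a 0 = Fin.cons (a 0 * a 1) fun k => a k.succ.succ := by
  funext j
  cases j using Fin.cases <;> simp [hochMerge]

theorem hochMerge_cons_succ {d : ℕ} (x : A) (a : Fin (d + 2) → A) (i : Fin (d + 1)) :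
    hochMerge (Fin.cons x a : Fin (d + 3) → A) i.succ = Fin.cons x (hochMerge a i) := by
  funext j
  cases j using Fin.cases with
  | zero => simp [hochMerge]
  | succ j =>
    simp only [hochMerge, Fin.cons_succ, Fin.val_succ, Nat.add_lt_add_iff_right,
      Nat.add_right_cancel_iff, ← Fin.succ_castSucc]

theorem prod_ofFn_hochMerge {d : ℕ} (a : Fin (d + 2) → A) (i : Fin (d + 1)) :
    (List.ofFn (hochMerge a i)).prod = (List.ofFn a).prod := by
  induction d with
  | zero => simp [Fin.fin_one_eq_zero i, hochMerge_zero, List.ofFn_succ]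
  | succ d ih =>
    cases i using Fin.cases with
    | zero => simp [hochMerge_zero, List.ofFn_succ, mul_assoc]
    | succ i =>
      cases a using Fin.consCases with
      | cons x a => simp only [hochMerge_cons_succ, List.ofFn_cons, List.prod_cons, ih]

theorem prod_ofFn_hochCyc {d : ℕ} (a : Fin (d + 2) → A) :
    (List.ofFn (hochCyc a)).prod = a (Fin.last _) * (List.ofFn fun k => a k.castSucc).prod := by
  simp [List.ofFn_succ, hochCyc, Fin.succ_ne_zero, mul_assoc]

theorem prod_ofFn_insertNth_one {n : ℕ} (j : Fin (n + 1)) (b : Fin n → A) :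
    (List.ofFn (j.insertNth 1 b)).prod = (List.ofFn b).prod := by
  induction n with
  | zero => simp [Fin.fin_one_eq_zero j]
  | succ n ih =>
    cases j using Fin.cases with
    | zero => simp
    | succ j =>
      cases b using Fin.consCases with
      | cons x b => simp only [Fin.insertNth_succ_cons, List.ofFn_cons, List.prod_cons, ih]

end Monoid

theorem sum_prod_ofFn_update_commutator {A : Type*} [Ring A] (u : A) {n : ℕ} (b : Fin n → A) :
    ∑ j, (List.ofFn (update b j (u * b j - b j * u))).prod =
      u * (List.ofFn b).prod - (List.ofFn b).prod * u := by
  induction n with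
  | zero => simp
  | succ n ih =>
    cases b using Fin.consCases with
    | cons x b =>
      simp only [Fin.sum_univ_succ, Fin.cons_zero, Fin.cons_succ, Fin.update_cons_zero,
        ← Fin.cons_update, List.ofFn_cons, List.prod_cons, ← Finset.mul_sum, ih]
      noncomm_ring

section HochschildTensorTrace

variable {K W D : Type*} [CommRing K] [Ring W] [Algebra K W] [Ring D] [Algebra K D]

theorem hochMerge_tmul {d : ℕ} (w : Fin (d + 2) → W) (b : Fin (d + 2) → D) (i : Fin (d + 1)) :
    hochMerge (fun j => w j ⊗ₜ[K] b j) i = fun j => hochMerge w i j ⊗ₜ[K] hochMerge b i j := by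
  funext j
  simp only [hochMerge]
  split_ifs <;> simp [Algebra.TensorProduct.tmul_mul_tmul]

theorem hochCyc_tmul {d : ℕ} (w : Fin (d + 2) → W) (b : Fin (d + 2) → D) :
    hochCyc (fun j => w j ⊗ₜ[K] b j) = fun j => hochCyc w j ⊗ₜ[K] hochCyc b j := by
  funext j
  simp only [hochCyc]
  split_ifs <;> simp [Algebra.TensorProduct.tmul_mul_tmul]

variable {d : ℕ} {τ : MultilinearMap K (fun _ : Fin (d + 1) => W) K} {φD : D →ₗ[K] K}
  {ψ : MultilinearMap K (fun _ : Fin (d + 1) => W ⊗[K] D) K}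

theorem IsHochschildCocycle.tmul_trace (hτ : IsHochschildCocycle τ)
    (hφ : ∀ x y : D, φD (x * y - y * x) = 0)
    (hψ : ∀ (a : Fin (d + 1) → W) (b : Fin (d + 1) → D),
      ψ (fun j => a j ⊗ₜ[K] b j) = τ a * φD (List.ofFn b).prod) :
    IsHochschildCocycle ψ := by
  have hφcomm : ∀ x y : D, φD (x * y) = φD (y * x) := fun x y =>
    sub_eq_zero.mp (by rw [← map_sub, hφ])
  intro a
  refine (isMultiadditive_hochschildCoboundary ψ).eq_zero_of_tmul (fun w b => ?_) a
  have hmerge : ∀ i, ψ (hochMerge (fun j => w j ⊗ₜ[K] b j) i) =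
      τ (hochMerge w i) * φD (List.ofFn b).prod := fun i => by
    rw [hochMerge_tmul, hψ, prod_ofFn_hochMerge]
  have hcyc : ψ (hochCyc fun j => w j ⊗ₜ[K] b j) = τ (hochCyc w) * φD (List.ofFn b).prod := by
    rw [hochCyc_tmul, hψ, prod_ofFn_hochCyc, hφcomm, ← List.prod_concat, ← List.ofFn_succ']
  simp only [hmerge, hcyc, ← smul_mul_assoc, ← Finset.sum_mul, ← add_mul, hτ w, zero_mul]

theorem sum_update_commutator_tmul_eq_zero (r : K) (s : W) (u : D)
    (hτ : ∀ a : Fin (d + 1) → W, ∑ j, τ (update a j (r • (s * a j - a j * s))) = 0)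
    (hφ : ∀ x y : D, φD (x * y - y * x) = 0)
    (hψ : ∀ (a : Fin (d + 1) → W) (b : Fin (d + 1) → D),
      ψ (fun j => a j ⊗ₜ[K] b j) = τ a * φD (List.ofFn b).prod)
    (a : Fin (d + 1) → W ⊗[K] D) :
    ∑ j, ψ (update a j (r • ((s ⊗ₜ[K] (1 : D) + (1 : W) ⊗ₜ[K] u) * a j -
      a j * (s ⊗ₜ[K] (1 : D) + (1 : W) ⊗ₜ[K] u)))) = 0 := by
  set γ := s ⊗ₜ[K] (1 : D) + (1 : W) ⊗ₜ[K] u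
  let L : W ⊗[K] D →+ W ⊗[K] D :=
    AddMonoidHom.mk' (fun x => r • (γ * x - x * γ)) fun x y => by
      rw [← smul_add]
      congr 1
      noncomm_ring
  refine (IsMultiadditive.sum _ fun j _ => ψ.isMultiadditive_comp
    (isSlotwiseAdditive_update_apply j L)).eq_zero_of_tmul (fun w b => ?_) a
  have hL : ∀ x y, r • (γ * (x ⊗ₜ[K] y) - (x ⊗ₜ[K] y) * γ) =
      (r • (s * x - x * s)) ⊗ₜ y + x ⊗ₜ ((r • u) * y - y * (r • u)) := fun x y => by
    simp only [γ, mul_add, add_mul, Algebra.TensorProduct.tmul_mul_tmul, one_mul, mul_one,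
      smul_mul_assoc, mul_smul_comm, TensorProduct.sub_tmul, TensorProduct.tmul_sub,
      TensorProduct.smul_tmul', TensorProduct.tmul_smul, smul_sub, smul_add]
    abel
  calc ∑ j, ψ (update (fun i => w i ⊗ₜ[K] b i) j (L (w j ⊗ₜ[K] b j)))
      = ∑ j, (τ (update w j (r • (s * w j - w j * s))) * φD (List.ofFn b).prod +
          τ w * φD (List.ofFn (update b j ((r • u) * b j - b j * (r • u)))).prod) := by
        refine Finset.sum_congr rfl fun j _ => ?_
        rw [AddMonoidHom.mk'_apply, hL, ψ.map_update_add, update_tmul, update_tmul,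
          update_eq_self, update_eq_self, hψ, hψ]
    _ = (∑ j, τ (update w j (r • (s * w j - w j * s)))) * φD (List.ofFn b).prod +
          τ w * φD (∑ j, (List.ofFn (update b j ((r • u) * b j - b j * (r • u)))).prod) := by
        rw [Finset.sum_add_distrib, ← Finset.sum_mul, ← Finset.mul_sum, ← map_sum φD]
    _ = 0 := by rw [hτ, sum_prod_ofFn_update_commutator, hφ, zero_mul, mul_zero, add_zero]

theorem sum_insertNth_tmul_eq_zero (s : W) (u : D)
    (hτnorm : ∀ a : Fin (d + 1) → W, (∃ j, j ≠ 0 ∧ a j = 1) → τ a = 0)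
    (hτ : ∀ a : Fin d → W,
      ∑ j ∈ Finset.univ.filter (fun j : Fin (d + 1) => j ≠ 0), τ (j.insertNth s a) = 0)
    (hψ : ∀ (a : Fin (d + 1) → W) (b : Fin (d + 1) → D),
      ψ (fun j => a j ⊗ₜ[K] b j) = τ a * φD (List.ofFn b).prod)
    (a : Fin d → W ⊗[K] D) :
    ∑ j ∈ Finset.univ.filter (fun j : Fin (d + 1) => j ≠ 0),
      ψ (j.insertNth (s ⊗ₜ[K] (1 : D) + (1 : W) ⊗ₜ[K] u) a) = 0 := by
  refine (IsMultiadditive.sum _ fun j _ => ψ.isMultiadditive_comp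
    (isSlotwiseAdditive_insertNth j _)).eq_zero_of_tmul (fun w b => ?_) a
  have hterm : ∀ j : Fin (d + 1), j ≠ 0 →
      ψ (j.insertNth (s ⊗ₜ[K] (1 : D) + (1 : W) ⊗ₜ[K] u) fun i => w i ⊗ₜ[K] b i) =
        τ (j.insertNth s w) * φD (List.ofFn b).prod := fun j hj => by
    rw [ψ.map_insertNth_add, insertNth_tmul, insertNth_tmul, hψ, hψ, prod_ofFn_insertNth_one,
      hτnorm _ ⟨j, hj, Fin.insertNth_apply_same ..⟩, zero_mul, add_zero]
  rw [Finset.sum_congr rfl fun j hj => hterm j (Finset.mem_filter.mp hj).2, ← Finset.sum_mul,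
    hτ, zero_mul]

end HochschildTensorTrace

theorem psi_is_basic_hochschild_cocycle_general
    {K W D : Type*} [Field K] [Ring W] [Algebra K W] [Ring D] [Algebra K D]
    (m : ℕ) (hb1 : K)
    (τ : MultilinearMap K (fun _ : Fin (2 * m + 1) => W) K)
    (SpW : Submodule K W) (wD : D)
    (φD : D →ₗ[K] K) (hφtr : ∀ x y : D, φD (x * y - y * x) = 0)
    (hτcoc : IsHochschildCocycle τ)
    (hτnorm : ∀ a : Fin (2 * m + 1) → W, (∃ j, j ≠ 0 ∧ a j = 1) → τ a = 0)
    (hτbasicLie : ∀ s ∈ SpW, ∀ a : Fin (2 * m + 1) → W,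
      ∑ j, τ (Function.update a j (hb1⁻¹ • (s * a j - a j * s))) = 0)
    (hτbasicContr : ∀ s ∈ SpW, ∀ a : Fin (2 * m) → W,
      ∑ j ∈ Finset.univ.filter (fun j : Fin (2 * m + 1) => j ≠ 0), τ (j.insertNth s a) = 0)
    (ψ : MultilinearMap K (fun _ : Fin (2 * m + 1) => W ⊗[K] D) K)
    (hψ : ∀ (a : Fin (2 * m + 1) → W) (b : Fin (2 * m + 1) → D),
      ψ (fun j => a j ⊗ₜ[K] b j) = τ a * φD (List.ofFn b).prod) :
    IsHochschildCocycle ψ ∧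
      ∀ s ∈ SpW, ∀ c : K,
        (∀ a : Fin (2 * m + 1) → W ⊗[K] D,
          ∑ j, ψ (Function.update a j (hb1⁻¹ •
            ((s ⊗ₜ[K] (1 : D) + (1 : W) ⊗ₜ[K] (c • wD)) * a j -
              a j * (s ⊗ₜ[K] (1 : D) + (1 : W) ⊗ₜ[K] (c • wD))))) = 0) ∧
        (∀ a : Fin (2 * m) → W ⊗[K] D,
          ∑ j ∈ Finset.univ.filter (fun j : Fin (2 * m + 1) => j ≠ 0),
            ψ (j.insertNth (s ⊗ₜ[K] (1 : D) + (1 : W) ⊗ₜ[K] (c • wD)) a) = 0) :=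
  ⟨hτcoc.tmul_trace hφtr hψ, fun s hs c =>
    ⟨sum_update_commutator_tmul_eq_zero hb1⁻¹ s (c • wD) (hτbasicLie s hs) hφtr hψ,
      sum_insertNth_tmul_eq_zero s (c • wD) hτnorm (hτbasicContr s hs) hψ⟩⟩

/-- Let `φ` be the normalized trace on the Dunkl–Weyl algebra `D` and let
`ψ_{2n−2}` (with `2n − 2 = 2m`) be defined on `W_{n−1}((ħ₁)) ⊗ D` by
`ψ(a₀⊗b₀, …, a_{2m}⊗b_{2m}) = τ_{2m}(a₀,…,a_{2m})·φ(b₀ ⋆ ⋯ ⋆ b_{2m})`, where `τ_{2m}` is a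
normalized `sp_{2n−2}`-basic Hochschild cocycle of the Weyl algebra.  Then `ψ` is a
Hochschild `2m`-cocycle, and it is basic with respect to `sp_{2n−2} ⊕ u₁` embedded via
`A ⊕ α ↦ (1/2)Σ a_{ij} w_i w_j ⊗ 1 + 1 ⊗ α z z̄` (the quadratic span `SpW` and the element
`z z̄ = wD`): both the Lie derivative and the contraction along any `γ` in the image
vanish. -/
theorem psi_is_basic_hochschild_cocycle
    {K W D : Type*} [Field K] [Ring W] [Algebra K W] [Ring D] [Algebra K D]
    (m : ℕ) (hb1 : K) (hhb1 : hb1 ≠ 0)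
    (τ : MultilinearMap K (fun _ : Fin (2 * m + 1) => W) K)
    (SpW : Submodule K W) (wD : D)
    (φD : D →ₗ[K] K) (hφ1 : φD 1 = 1) (hφtr : ∀ x y : D, φD (x * y - y * x) = 0)
    (hτcoc : IsHochschildCocycle τ)
    (hτnorm : ∀ a : Fin (2 * m + 1) → W, (∃ j, j ≠ 0 ∧ a j = 1) → τ a = 0)
    (hτbasicLie : ∀ s ∈ SpW, ∀ a : Fin (2 * m + 1) → W,
      ∑ j, τ (Function.update a j (hb1⁻¹ • (s * a j - a j * s))) = 0)
    (hτbasicContr : ∀ s ∈ SpW, ∀ a : Fin (2 * m) → W,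
      ∑ j ∈ Finset.univ.filter (fun j : Fin (2 * m + 1) => j ≠ 0), τ (j.insertNth s a) = 0)
    (ψ : MultilinearMap K (fun _ : Fin (2 * m + 1) => W ⊗[K] D) K)
    (hψ : ∀ (a : Fin (2 * m + 1) → W) (b : Fin (2 * m + 1) → D),
      ψ (fun j => a j ⊗ₜ[K] b j) = τ a * φD (List.ofFn b).prod) :
    IsHochschildCocycle ψ ∧
      ∀ s ∈ SpW, ∀ c : K,
        (∀ a : Fin (2 * m + 1) → W ⊗[K] D,
          ∑ j, ψ (Function.update a j (hb1⁻¹ •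
            ((s ⊗ₜ[K] (1 : D) + (1 : W) ⊗ₜ[K] (c • wD)) * a j -
              a j * (s ⊗ₜ[K] (1 : D) + (1 : W) ⊗ₜ[K] (c • wD))))) = 0) ∧
        (∀ a : Fin (2 * m) → W ⊗[K] D,
          ∑ j ∈ Finset.univ.filter (fun j : Fin (2 * m + 1) => j ≠ 0),
            ψ (j.insertNth (s ⊗ₜ[K] (1 : D) + (1 : W) ⊗ₜ[K] (c • wD)) a) = 0) :=
  psi_is_basic_hochschild_cocycle_general m hb1 τ SpW wD φD hφtr hτcoc hτnorm hτbasicLie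
    hτbasicContr ψ hψ
end
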